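/- Let κ = 1 + √2. The point (θ0, θ1, θ2, θ3, ζ) with ζ = π/4, θ0 = arctan(1/(1 + √2·κ)), θ1 = −θ0, θ2 = arctan(1/(1 − √2·κ)), and θ3 = −θ2 is an equilibrium of the minimal frequency-spiral model with parameter ω = 0. -/

import Mathlib

/-!
With `θ = arctan t`, the equation `sin (ζ - θ) = κ sin θ` is linear in `t = tan θ`:
dividing by `cos θ > 0` it reads `(κ + cos ζ) t = sin ζ`. At `ζ = π/4` this gives
`t = 1 / (1 + √2 κ)`, and replacing `κ` by `-κ` gives `t = 1 / (1 - √2 κ)`.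
Since `2ζ = π/2`, the quarter-turn shifts turn the equations for `-θ0` and `-θ2` into
those for `θ0` and `θ2`, and the couplings then cancel in pairs in the equation for `ζ`.
-/

open Real

/-- An equilibrium of the minimal frequency-spiral model with parameter `ω` and
`κ = 1 + √2`: all five right-hand sides of the ODE system vanish. -/
def IsMinimalSpiralEquilibrium (ω θ0 θ1 θ2 θ3 ζ : ℝ) : Prop :=
  Real.sin (ζ - θ0) - (1 + Real.sqrt 2) * Real.sin θ0 = 0 ∧
  Real.sin (ζ - θ1 - Real.pi / 2) - (1 + Real.sqrt 2) * Real.sin θ1 = 0 ∧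
  Real.sin (ζ - θ2 - Real.pi) - (1 + Real.sqrt 2) * Real.sin θ2 = 0 ∧
  Real.sin (ζ - θ3 - 3 * Real.pi / 2) - (1 + Real.sqrt 2) * Real.sin θ3 = 0 ∧
  ω - Real.sin (ζ - θ0) - Real.sin (ζ - θ1 - Real.pi / 2)
    - Real.sin (ζ - θ2 - Real.pi) - Real.sin (ζ - θ3 - 3 * Real.pi / 2) = 0

theorem sin_sub_arctan_eq_mul_sin {ζ κ t : ℝ} (ht : (κ + cos ζ) * t = sin ζ) :
    sin (ζ - arctan t) = κ * sin (arctan t) := by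
  rw [sin_sub, sin_arctan, cos_arctan, ← ht]
  ring

theorem sin_pi_div_four_sub_arctan {κ : ℝ} (hκ : 1 + √2 * κ ≠ 0) :
    sin (π / 4 - arctan (1 / (1 + √2 * κ))) = κ * sin (arctan (1 / (1 + √2 * κ))) := by
  refine sin_sub_arctan_eq_mul_sin ?_
  rw [cos_pi_div_four, sin_pi_div_four, mul_one_div, div_eq_iff hκ]
  linear_combination (-κ / 2) * sq_sqrt (zero_le_two : (0 : ℝ) ≤ 2)

theorem isMinimalSpiralEquilibrium_zero_of_sin_pi_div_four_sub {a b : ℝ}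
    (ha : sin (π / 4 - a) = (1 + √2) * sin a)
    (hb : sin (π / 4 - b) = -(1 + √2) * sin b) :
    IsMinimalSpiralEquilibrium 0 a (-a) b (-b) (π / 4) := by
  have h1 : sin (π / 4 - -a - π / 2) = -sin (π / 4 - a) := by
    rw [show π / 4 - -a - π / 2 = -(π / 4 - a) by ring, sin_neg]
  have h2 : sin (π / 4 - b - π) = -sin (π / 4 - b) := sin_sub_pi _
  have h3 : sin (π / 4 - -b - 3 * π / 2) = sin (π / 4 - b) := by
    rw [show π / 4 - -b - 3 * π / 2 = -(π / 4 - b) - π by ring, sin_sub_pi, sin_neg, neg_neg]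
  refine ⟨?_, ?_, ?_, ?_, ?_⟩ <;> simp only [h1, h2, h3, ha, hb, sin_neg] <;> ring

/-- With `κ = 1 + √2`, the point with `ζ = π/4`, `θ0 = arctan(1/(1 + √2·κ)) = −θ1`, and
`θ2 = arctan(1/(1 − √2·κ)) = −θ3` is an equilibrium of the minimal frequency-spiral
model with parameter `ω = 0`. -/
theorem minimalSpiral_equilibrium_at_omega_zero :
    IsMinimalSpiralEquilibrium 0
      (Real.arctan (1 / (1 + Real.sqrt 2 * (1 + Real.sqrt 2))))
      (-Real.arctan (1 / (1 + Real.sqrt 2 * (1 + Real.sqrt 2))))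
      (Real.arctan (1 / (1 - Real.sqrt 2 * (1 + Real.sqrt 2))))
      (-Real.arctan (1 / (1 - Real.sqrt 2 * (1 + Real.sqrt 2))))
      (Real.pi / 4) := by
  have hκ : 1 < √2 * (1 + √2) := by nlinarith [one_lt_sqrt_two]
  refine isMinimalSpiralEquilibrium_zero_of_sin_pi_div_four_sub
    (sin_pi_div_four_sub_arctan (by positivity)) ?_
  have h := sin_pi_div_four_sub_arctan (κ := -(1 + √2)) (by linarith)
  rwa [show 1 + √2 * -(1 + √2) = 1 - √2 * (1 + √2) by ring] at h
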